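/- arXiv:math/0605597 — 7 statements merged into one kernel-verified Lean document; each statement's English description precedes it below -/
import Mathlib

section
/- Let X be a complete metric space and (X, ℝ, π) a flow on X. If a point x ∈ X is almost periodic (in the sense of Bohr), then x is recurrent (in the sense of Birkhoff); in particular, the hull H(x) = closure{π(t, x) : t ∈ ℝ} is compact. -/
open Filter Topology

/-- In a complete metric space, an almost periodic point (in the sense of Bohr) of a flow
is recurrent (in the sense of Birkhoff): it is almost recurrent and its hull
`H(x) = closure {π(t, x) : t ∈ ℝ}` is compact. -/
theorem almostPeriodic_is_recurrent {X : Type*} [MetricSpace X] [CompleteSpace X]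
    (π : ℝ → X → X)
    (hcont : Continuous fun p : ℝ × X => π p.1 p.2)
    (hid : ∀ x : X, π 0 x = x)
    (hadd : ∀ (t τ : ℝ) (x : X), π (t + τ) x = π t (π τ x))
    (x : X)
    (hap : ∀ ε > (0 : ℝ), ∃ l > (0 : ℝ), ∀ a : ℝ,
      ∃ τ ∈ Set.Icc a (a + l), ∀ t : ℝ, dist (π (τ + t) x) (π t x) < ε) :
    (∀ ε > (0 : ℝ), ∃ l > (0 : ℝ), ∀ a : ℝ,
      ∃ τ ∈ Set.Icc a (a + l), dist (π τ x) x < ε) ∧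
    IsCompact (closure (Set.range fun t : ℝ => π t x)) := by
  constructor
  · intro ε hε
    obtain ⟨l, hl, h⟩ := hap ε hε
    refine ⟨l, hl, fun a => ?_⟩
    obtain ⟨τ, hτ, hτ'⟩ := h a
    refine ⟨τ, hτ, ?_⟩
    have := hτ' 0
    simpa [hid] using this
  · have hcx : Continuous fun t : ℝ => π t x :=
      hcont.comp (continuous_id.prodMk continuous_const)
    refine TotallyBounded.isCompact_of_isClosed ?_ isClosed_closure
    refine TotallyBounded.closure ?_
    rw [Metric.totallyBounded_iff]
    intro ε hε
    obtain ⟨l, hl, h⟩ := hap (ε / 2) (by linarith)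
    have hK : IsCompact ((fun t : ℝ => π t x) '' Set.Icc 0 l) :=
      (isCompact_Icc).image hcx
    obtain ⟨s, hsfin, hs⟩ := (Metric.totallyBounded_iff.mp hK.totallyBounded)
      (ε / 2) (by linarith)
    refine ⟨s, hsfin, ?_⟩
    rintro _ ⟨t, rfl⟩
    obtain ⟨τ, hτmem, hτ⟩ := h (-t)
    have hmem : π (τ + t) x ∈ (fun t : ℝ => π t x) '' Set.Icc 0 l :=
      ⟨τ + t, ⟨by linarith [hτmem.1], by linarith [hτmem.2]⟩, rfl⟩
    obtain ⟨y, hy, hby⟩ := Set.mem_iUnion₂.mp (hs hmem)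
    refine Set.mem_iUnion₂.mpr ⟨y, hy, ?_⟩
    have h1 := hτ t
    have h2 : dist (π (τ + t) x) y < ε / 2 := by
      simpa [Metric.mem_ball] using hby
    have := dist_triangle (π t x) (π (τ + t) x) y
    rw [Metric.mem_ball]
    rw [dist_comm] at h1
    linarith
end

section
/- Let X be a complete metric space with metric ρ and let (X, ℝ, π) be a flow on X. A point x ∈ X is almost periodic (in the sense of Bohr) if and only if the following two conditions hold: (1) x is recurrent (in the sense of Birkhoff); (2) the restricted flow (H(x), ℝ, π) on the hull H(x) = closure{π(t, x) : t ∈ ℝ} is equicontinuous, i.e., for every ε > 0 there exists δ(ε) > 0 such that for all x₁, x₂ ∈ H(x) with ρ(x₁, x₂) < δ one has ρ(π(t, x₁), π(t, x₂)) < ε for all t ∈ ℝ. -/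
open Filter Topology

/-- In a complete metric space, a point `x` of a flow is almost periodic
(in the sense of Bohr) if and only if (1) `x` is recurrent (in the sense of Birkhoff)
and (2) the flow restricted to the hull `H(x) = closure {π(t, x) : t ∈ ℝ}` is
equicontinuous. -/
theorem almostPeriodic_iff_recurrent_and_equicontinuous {X : Type*} [MetricSpace X]
    [CompleteSpace X]
    (π : ℝ → X → X)
    (hcont : Continuous fun p : ℝ × X => π p.1 p.2)
    (hid : ∀ x : X, π 0 x = x)
    (hadd : ∀ (t τ : ℝ) (x : X), π (t + τ) x = π t (π τ x))
    (x : X) :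
    (∀ ε > (0 : ℝ), ∃ l > (0 : ℝ), ∀ a : ℝ,
      ∃ τ ∈ Set.Icc a (a + l), ∀ t : ℝ, dist (π (τ + t) x) (π t x) < ε) ↔
    (((∀ ε > (0 : ℝ), ∃ l > (0 : ℝ), ∀ a : ℝ,
        ∃ τ ∈ Set.Icc a (a + l), dist (π τ x) x < ε) ∧
      IsCompact (closure (Set.range fun t : ℝ => π t x))) ∧
     (∀ ε > (0 : ℝ), ∃ δ > (0 : ℝ),
        ∀ x₁ ∈ closure (Set.range fun t : ℝ => π t x),
        ∀ x₂ ∈ closure (Set.range fun t : ℝ => π t x),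
          dist x₁ x₂ < δ → ∀ t : ℝ, dist (π t x₁) (π t x₂) < ε)) := by
  set H := closure (Set.range fun t : ℝ => π t x) with hHdef
  have horb : ∀ t : ℝ, Continuous fun y : X => π t y := fun t =>
    hcont.comp (continuous_const.prodMk continuous_id)
  have hxmem : x ∈ H := subset_closure ⟨0, hid x⟩
  constructor
  · intro h
    -- almost recurrence
    have hrec : ∀ ε > (0 : ℝ), ∃ l > (0 : ℝ), ∀ a : ℝ,
        ∃ τ ∈ Set.Icc a (a + l), dist (π τ x) x < ε := by
      intro ε hε
      obtain ⟨l, hl, hP⟩ := h ε hε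
      refine ⟨l, hl, fun a => ?_⟩
      obtain ⟨τ, hτ, hτP⟩ := hP a
      refine ⟨τ, hτ, ?_⟩
      have := hτP 0
      simpa [hid] using this
    -- compactness of the hull
    have hHcompact : IsCompact H := by
      have htb : TotallyBounded (Set.range fun t : ℝ => π t x) := by
        rw [Metric.totallyBounded_iff]
        intro ε hε
        obtain ⟨l, hl, hP⟩ := h (ε / 2) (by linarith)
        have hKc : IsCompact ((fun t : ℝ => π t x) '' Set.Icc 0 l) :=
          isCompact_Icc.image (hcont.comp (continuous_id.prodMk continuous_const))
        obtain ⟨F, hFfin, hFcov⟩ := Metric.totallyBounded_iff.1 hKc.totallyBounded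
          (ε / 2) (by linarith)
        refine ⟨F, hFfin, ?_⟩
        rintro _ ⟨s, rfl⟩
        obtain ⟨τ, hτ, hτP⟩ := hP (-s)
        have hmem : π (τ + s) x ∈ (fun t : ℝ => π t x) '' Set.Icc 0 l :=
          ⟨τ + s, ⟨by linarith [hτ.1], by linarith [hτ.2]⟩, rfl⟩
        obtain ⟨y, hyF, hyball⟩ := Set.mem_iUnion₂.1 (hFcov hmem)
        refine Set.mem_iUnion₂.2 ⟨y, hyF, ?_⟩
        have h1 : dist (π (τ + s) x) (π s x) < ε / 2 := hτP s
        have h2 : dist (π (τ + s) x) y < ε / 2 := hyball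
        rw [Metric.mem_ball]
        calc dist (π s x) y ≤ dist (π s x) (π (τ + s) x) + dist (π (τ + s) x) y :=
              dist_triangle _ _ _
          _ < ε / 2 + ε / 2 := by rw [dist_comm] at h1; linarith
          _ = ε := by ring
      exact TotallyBounded.isCompact_of_isClosed htb.closure isClosed_closure
    refine ⟨⟨hrec, hHcompact⟩, ?_⟩
    -- equicontinuity
    intro ε hε
    obtain ⟨l, hl, hP⟩ := h (ε / 3) (by linarith)
    -- uniform continuity on the compact set [0,l] × H
    have hKc : IsCompact (Set.Icc (0 : ℝ) l ×ˢ H) := isCompact_Icc.prod hHcompact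
    have huc : UniformContinuousOn (fun p : ℝ × X => π p.1 p.2)
        (Set.Icc (0 : ℝ) l ×ˢ H) :=
      hKc.uniformContinuousOn_of_continuous hcont.continuousOn
    obtain ⟨δ, hδ, hδP⟩ := Metric.uniformContinuousOn_iff.1 huc (ε / 3) (by linarith)
    refine ⟨δ, hδ, ?_⟩
    intro x₁ hx₁ x₂ hx₂ hdist t
    obtain ⟨τ, hτ, hτP⟩ := hP (-t)
    -- τ is an (ε/3)-almost period of every point of the hull (non-strictly)
    have hAP : ∀ y ∈ H, ∀ s : ℝ, dist (π (τ + s) y) (π s y) ≤ ε / 3 := by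
      intro y hy s
      have hclosed : IsClosed {z : X | dist (π (τ + s) z) (π s z) ≤ ε / 3} :=
        isClosed_le (Continuous.dist (horb _) (horb _)) continuous_const
      have hsub : Set.range (fun t : ℝ => π t x) ⊆
          {z : X | dist (π (τ + s) z) (π s z) ≤ ε / 3} := by
        rintro _ ⟨u, rfl⟩
        have h1 : π (τ + s) (π u x) = π (τ + (s + u)) x := by
          rw [← hadd, add_assoc]
        have h2 : π s (π u x) = π (s + u) x := (hadd s u x).symm
        simp only [Set.mem_setOf_eq, h1, h2]
        exact le_of_lt (hτP (s + u))
      exact closure_minimal hsub hclosed hy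
    have hmid : dist (π (τ + t) x₁) (π (τ + t) x₂) < ε / 3 := by
      have h0t : τ + t ∈ Set.Icc (0 : ℝ) l := ⟨by linarith [hτ.1], by linarith [hτ.2]⟩
      have hpd : dist ((τ + t, x₁) : ℝ × X) (τ + t, x₂) < δ := by
        rw [Prod.dist_eq]
        simp only [dist_self]
        exact max_lt hδ hdist
      have := hδP (τ + t, x₁) (Set.mk_mem_prod h0t hx₁) (τ + t, x₂)
        (Set.mk_mem_prod h0t hx₂) hpd
      simpa using this
    have h1 : dist (π t x₁) (π (τ + t) x₁) ≤ ε / 3 := by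
      rw [dist_comm]; exact hAP x₁ hx₁ t
    have h3 : dist (π (τ + t) x₂) (π t x₂) ≤ ε / 3 := hAP x₂ hx₂ t
    calc dist (π t x₁) (π t x₂)
        ≤ dist (π t x₁) (π (τ + t) x₁) + dist (π (τ + t) x₁) (π (τ + t) x₂)
          + dist (π (τ + t) x₂) (π t x₂) := dist_triangle4 _ _ _ _
      _ < ε / 3 + ε / 3 + ε / 3 := by linarith
      _ = ε := by ring
  · rintro ⟨⟨hrec, _⟩, hequi⟩
    intro ε hε
    obtain ⟨δ, hδ, hδP⟩ := hequi ε hε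
    obtain ⟨l, hl, hP⟩ := hrec δ hδ
    refine ⟨l, hl, fun a => ?_⟩
    obtain ⟨τ, hτ, hτP⟩ := hP a
    refine ⟨τ, hτ, fun t => ?_⟩
    have hmem : π τ x ∈ H := subset_closure ⟨τ, rfl⟩
    have := hδP (π τ x) hmem x hxmem hτP t
    have heq : π (τ + t) x = π t (π τ x) := by rw [add_comm, hadd]
    rw [heq]
    exact this
end

section
/- The function g : ℝ → ℝ given by g(t) = 2 + sin(t) + sin(πt) satisfies g(t) > 0 for all t ∈ ℝ, and the infimum of g over ℝ equals 0. Consequently, the continuous function φ(t) = 1/(2 + sin(t) + sin(πt)) is well defined on all of ℝ and is unbounded on ℝ. -/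
open Filter Topology

private lemma sin_lip (a b : ℝ) : |Real.sin a - Real.sin b| ≤ |a - b| := by
  rw [Real.sin_sub_sin, abs_mul, abs_mul]
  have h1 : |Real.sin ((a - b) / 2)| ≤ |(a - b) / 2| := Real.abs_sin_le_abs
  have h2 : |Real.cos ((a + b) / 2)| ≤ 1 := Real.abs_cos_le_one _
  have h3 : |(a - b) / 2| = |a - b| / 2 := by rw [abs_div]; norm_num
  have h4 : |(2 : ℝ)| = 2 := by norm_num
  rw [h3] at h1
  rw [h4]
  nlinarith [abs_nonneg (Real.sin ((a - b) / 2)), abs_nonneg (a - b),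
    abs_nonneg (Real.cos ((a + b) / 2))]

private lemma dense_int_pi (x ε : ℝ) (hε : 0 < ε) :
    ∃ m n : ℤ, |(m : ℝ) + n * Real.pi - x| < ε := by
  set S : AddSubgroup ℝ := AddSubgroup.closure ({1, Real.pi} : Set ℝ) with hS
  rcases S.dense_or_cyclic with hd | ⟨a, ha⟩
  · have := Metric.mem_closure_iff.1 (hd x) ε hε
    obtain ⟨s, hs, hdist⟩ := this
    rw [hS, SetLike.mem_coe, AddSubgroup.mem_closure_pair] at hs
    obtain ⟨m, n, hmn⟩ := hs
    refine ⟨m, n, ?_⟩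
    have : (m : ℝ) + n * Real.pi = s := by
      rw [← hmn]; push_cast [zsmul_eq_mul]; ring
    rw [this, abs_sub_comm]
    simpa [Real.dist_eq] using hdist
  · exfalso
    have h1 : (1 : ℝ) ∈ S := AddSubgroup.subset_closure (by simp)
    have hpi : Real.pi ∈ S := AddSubgroup.subset_closure (by simp)
    rw [ha, AddSubgroup.mem_closure_singleton] at h1 hpi
    obtain ⟨m, hm⟩ := h1
    obtain ⟨n, hn⟩ := hpi
    rw [zsmul_eq_mul] at hm hn
    have hm0 : (m : ℝ) ≠ 0 := by
      intro h; rw [h, zero_mul] at hm; exact one_ne_zero hm.symm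
    have ha' : a = 1 / (m : ℝ) := by field_simp at hm ⊢; linarith
    have hrat : ((n : ℝ)) / (m : ℝ) = Real.pi := by
      rw [← hn, ha']; ring
    exact irrational_pi ⟨(n : ℚ) / (m : ℚ), by push_cast; exact hrat⟩


private lemma small_values (ε : ℝ) (hε : 0 < ε) :
    ∃ t : ℝ, 2 + Real.sin t + Real.sin (Real.pi * t) < ε := by
  have hpi := Real.pi_pos
  set η : ℝ := ε / (2 * Real.pi + 1) with hηdef
  have hη : 0 < η := by positivity
  obtain ⟨m, n, hd⟩ := dense_int_pi ((3 - 3 * Real.pi) / 4) η hη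
  set t : ℝ := 3 * Real.pi / 2 + (n : ℝ) * (2 * Real.pi) with htdef
  refine ⟨t, ?_⟩
  have hsin32 : Real.sin (3 * Real.pi / 2) = -1 := by
    rw [show 3 * Real.pi / 2 = Real.pi + Real.pi / 2 by ring, Real.sin_add]
    simp
  have hst : Real.sin t = -1 := by
    rw [htdef, Real.sin_add_int_mul_two_pi, hsin32]
  set p : ℝ := 3 * Real.pi / 2 + ((-m : ℤ) : ℝ) * (2 * Real.pi) with hpdef
  have hsp : Real.sin p = -1 := by
    rw [hpdef, Real.sin_add_int_mul_two_pi, hsin32]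
  have habs : |Real.pi * t - p| =
      2 * Real.pi * |(m : ℝ) + n * Real.pi - (3 - 3 * Real.pi) / 4| := by
    rw [show Real.pi * t - p
        = 2 * Real.pi * ((m : ℝ) + n * Real.pi - (3 - 3 * Real.pi) / 4) by
      rw [htdef, hpdef]; push_cast; ring, abs_mul, abs_of_pos (by positivity)]
  have hlip := sin_lip (Real.pi * t) p
  rw [hsp, habs] at hlip
  have h2 : |Real.sin (Real.pi * t) - -1| < 2 * Real.pi * η := by
    calc |Real.sin (Real.pi * t) - -1|
        ≤ 2 * Real.pi * |(m : ℝ) + n * Real.pi - (3 - 3 * Real.pi) / 4| := hlip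
      _ < 2 * Real.pi * η := by
          apply mul_lt_mul_of_pos_left hd (by positivity)
  have h3 : Real.sin (Real.pi * t) - -1 ≤ |Real.sin (Real.pi * t) - -1| :=
    le_abs_self _
  have h4 : 2 * Real.pi * η < ε := by
    rw [hηdef]
    rw [div_eq_iff (by positivity : (2 * Real.pi + 1) ≠ 0)] at *
    nlinarith
  rw [hst]
  nlinarith

/-- The function `g(t) = 2 + sin t + sin (π t)` is everywhere positive, its infimum
over `ℝ` equals `0`, and consequently `φ(t) = 1 / g(t)` is well defined on all of `ℝ`
and is unbounded on `ℝ`. -/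
theorem two_add_sin_add_sin_pi_pos_inf_zero_and_inv_unbounded :
    (∀ t : ℝ, 0 < 2 + Real.sin t + Real.sin (Real.pi * t)) ∧
    ((⨅ t : ℝ, (2 + Real.sin t + Real.sin (Real.pi * t))) = 0) ∧
    (∀ M : ℝ, ∃ t : ℝ, M < 1 / (2 + Real.sin t + Real.sin (Real.pi * t))) := by
  have hpos : ∀ t : ℝ, 0 < 2 + Real.sin t + Real.sin (Real.pi * t) := by
    intro t
    have h1 : -1 ≤ Real.sin t := Real.neg_one_le_sin t
    have h2 : -1 ≤ Real.sin (Real.pi * t) := Real.neg_one_le_sin _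
    rcases lt_or_eq_of_le h1 with h1' | h1'
    · nlinarith
    rcases lt_or_eq_of_le h2 with h2' | h2'
    · nlinarith
    exfalso
    obtain ⟨k, hk⟩ := Real.sin_eq_neg_one_iff.1 h1'.symm
    obtain ⟨j, hj⟩ := Real.sin_eq_neg_one_iff.1 h2'.symm
    have E : Real.pi * (Real.pi * (2 * (k : ℝ) - 1 / 2))
        = Real.pi * (2 * (j : ℝ) - 1 / 2) := by
      have h5 : Real.pi * t = Real.pi * (Real.pi * (2 * (k : ℝ) - 1 / 2)) := by
        rw [← hk]; ring
      rw [← h5, ← hj]; ring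
    have key : Real.pi * (2 * (k : ℝ) - 1 / 2) = 2 * (j : ℝ) - 1 / 2 :=
      mul_left_cancel₀ Real.pi_ne_zero E
    have hk0 : ((4 * k - 1 : ℤ) : ℝ) ≠ 0 := by
      exact_mod_cast (by omega : (4 * k - 1 : ℤ) ≠ 0)
    refine irrational_pi ⟨(4 * (j : ℚ) - 1) / (4 * (k : ℚ) - 1), ?_⟩
    push_cast
    rw [div_eq_iff (by push_cast at hk0 ⊢; exact hk0)]
    linarith
  refine ⟨hpos, ?_, ?_⟩
  · have hbdd : BddBelow (Set.range fun t : ℝ =>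
        2 + Real.sin t + Real.sin (Real.pi * t)) := by
      refine ⟨0, ?_⟩
      rintro x ⟨t, rfl⟩
      exact (hpos t).le
    apply le_antisymm
    · apply le_of_forall_pos_le_add
      intro ε hε
      obtain ⟨t, ht⟩ := small_values ε hε
      calc (⨅ t : ℝ, (2 + Real.sin t + Real.sin (Real.pi * t)))
          ≤ 2 + Real.sin t + Real.sin (Real.pi * t) := ciInf_le hbdd t
        _ ≤ 0 + ε := by linarith
    · exact le_ciInf fun t => (hpos t).le
  · intro M
    have hε : 0 < 1 / (|M| + 1) := by positivity
    obtain ⟨t, ht⟩ := small_values _ hε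
    refine ⟨t, ?_⟩
    have hg := hpos t
    have h1 : |M| + 1 < 1 / (2 + Real.sin t + Real.sin (Real.pi * t)) := by
      rw [show |M| + 1 = 1 / (1 / (|M| + 1)) by field_simp]
      exact one_div_lt_one_div_of_lt hg ht
    have : M ≤ |M| := le_abs_self M
    linarith
end

section
/- The function φ ∈ C(ℝ, ℝ) defined by φ(t) = 1/(2 + sin(t) + sin(πt)) is Poisson stable under the Bebutov translation flow on C(ℝ, ℝ) with the compact-open topology: there exist sequences t_n → +∞ and s_n → −∞ such that the translates φ(· + t_n) → φ and φ(· + s_n) → φ uniformly on every compact subset of ℝ. -/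
/-!
Translating by `τ = 2πk` with `k ∈ ℤ` leaves `sin x` unchanged and moves `sin (πx)` by at most
`2π · |kπ - j|` for any integer `j`. Dirichlet's approximation theorem gives integers `k → ∞` with
`kπ` ever closer to an integer, so the translated denominators `2 + sin x + sin (πx)` converge
uniformly on `ℝ`, and using `-k` gives the same for `τ → -∞`. Because `π` is irrational, the two
sines are never `-1` simultaneously, so the denominator is positive and the reciprocals converge
uniformly on compact sets.
-/

open Filter Topology Real

theorem exists_int_le_abs_mul_sub_le (ξ : ℝ) {n : ℕ} (hn : 0 < n) :
    ∃ k j : ℤ, n ≤ k ∧ |k * ξ - j| ≤ 1 / n := by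
  -- Dirichlet with denominator bound `n ^ 2`, then scale the approximation by `n`.
  obtain ⟨j, k, hk, -, hkj⟩ := Real.exists_int_int_abs_mul_sub_le ξ (pow_pos hn 2)
  refine ⟨n * k, n * j, by nlinarith, ?_⟩
  have hn' : (0 : ℝ) < n := by exact_mod_cast hn
  calc |((n * k : ℤ) : ℝ) * ξ - (n * j : ℤ)| = n * |k * ξ - j| := by
        push_cast
        rw [mul_assoc, ← mul_sub, abs_mul, Nat.abs_cast]
    _ ≤ n * (1 / (n ^ 2 + 1)) := by push_cast at hkj; gcongr
    _ ≤ 1 / n := by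
        rw [mul_one_div, div_le_div_iff₀ (by positivity) hn']
        nlinarith

theorem exists_tendsto_atTop_mul_sub_tendsto_zero (ξ : ℝ) :
    ∃ k j : ℕ → ℤ, Tendsto k atTop atTop ∧ Tendsto (fun n => k n * ξ - j n) atTop (𝓝 0) := by
  choose k j hk hkj using fun n : ℕ => exists_int_le_abs_mul_sub_le ξ n.succ_pos
  refine ⟨k, j, tendsto_atTop_mono (fun n => ?_) tendsto_natCast_atTop_atTop, ?_⟩
  · exact le_trans (by push_cast; omega) (hk n)
  · refine squeeze_zero_norm (fun n => ?_) tendsto_one_div_add_atTop_nhds_zero_nat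
    simpa using hkj n

theorem two_add_sin_add_sin_pi_mul_pos (x : ℝ) : 0 < 2 + sin x + sin (π * x) := by
  rcases (neg_one_le_sin x).lt_or_eq with h₁ | h₁
  · linarith [neg_one_le_sin (π * x)]
  rcases (neg_one_le_sin (π * x)).lt_or_eq with h₂ | h₂
  · linarith
  -- Both sines equal `-1` would force `π = (4j - 1) / (4k - 1)`.
  obtain ⟨k, rfl⟩ := sin_eq_neg_one_iff.mp h₁.symm
  obtain ⟨j, hj⟩ := sin_eq_neg_one_iff.mp h₂.symm
  have hk : (4 * k - 1 : ℤ) ≠ 0 := by omega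
  exfalso
  refine (irrational_pi.mul_intCast hk).ne_int (4 * j - 1) ?_
  have h : π * (π * (4 * k - 1)) = π * (4 * j - 1) := by linarith
  push_cast
  exact mul_left_cancel₀ pi_pos.ne' h

theorem abs_sin_pi_mul_add_two_pi_mul_sub_le (x : ℝ) (k j : ℤ) :
    |sin (π * (x + 2 * π * k)) - sin (π * x)| ≤ 2 * π * |k * π - j| := by
  have h : π * (x + 2 * π * k) = π * x + 2 * π * (k * π - j) + j * (2 * π) := by ring
  rw [h, sin_add_int_mul_two_pi]
  calc _ ≤ |π * x + 2 * π * (k * π - j) - π * x| := abs_sin_sub_sin_le _ _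
    _ = 2 * π * |k * π - j| := by
        rw [add_sub_cancel_left, abs_mul, abs_of_pos two_pi_pos]

theorem tendstoUniformly_two_add_sin_add_sin_pi_mul_translate {k j : ℕ → ℤ}
    (hkj : Tendsto (fun n => k n * π - j n) atTop (𝓝 0)) :
    TendstoUniformly (fun n x => 2 + sin (x + 2 * π * k n) + sin (π * (x + 2 * π * k n)))
      (fun x => 2 + sin x + sin (π * x)) atTop := by
  rw [Metric.tendstoUniformly_iff]
  intro ε hε
  have hsmall : Tendsto (fun n => 2 * π * |k n * π - j n|) atTop (𝓝 0) := by
    simpa using (hkj.abs.const_mul (2 * π))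
  filter_upwards [hsmall.eventually_lt_const hε] with n hn x
  have hper : sin (x + 2 * π * k n) = sin x := by
    rw [mul_comm, sin_add_int_mul_two_pi]
  rw [dist_comm, Real.dist_eq, hper, add_sub_add_left_eq_sub]
  exact (abs_sin_pi_mul_add_two_pi_mul_sub_le x (k n) (j n)).trans_lt hn

theorem tendstoUniformlyOn_inv_two_add_sin_add_sin_pi_mul_translate {k j : ℕ → ℤ}
    (hkj : Tendsto (fun n => k n * π - j n) atTop (𝓝 0)) {K : Set ℝ} (hK : IsCompact K) :
    TendstoUniformlyOn
      (fun n x => 1 / (2 + sin (x + 2 * π * k n) + sin (π * (x + 2 * π * k n))))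
      (fun x => 1 / (2 + sin x + sin (π * x))) atTop K := by
  simp only [one_div]
  refine tendstoLocallyUniformly_iff_forall_isCompact.mp ?_ K hK
  exact (tendstoUniformly_two_add_sin_add_sin_pi_mul_translate hkj).tendstoLocallyUniformly
    |>.fun_inv₀ (by fun_prop) fun x => (two_add_sin_add_sin_pi_mul_pos x).ne'

/-- The function `φ(t) = 1 / (2 + sin t + sin (π t))` is Poisson stable under the
Bebutov translation flow on `C(ℝ, ℝ)` with the compact-open topology: there exist
sequences `t_n → +∞` and `s_n → −∞` such that the translates `φ(· + t_n)` and
`φ(· + s_n)` converge to `φ` uniformly on every compact subset of `ℝ`. -/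
theorem inv_two_add_sin_add_sin_pi_poisson_stable :
    ∃ t s : ℕ → ℝ,
      Tendsto t atTop atTop ∧ Tendsto s atTop atBot ∧
      (∀ K : Set ℝ, IsCompact K →
        TendstoUniformlyOn
          (fun n x => 1 / (2 + Real.sin (x + t n) + Real.sin (Real.pi * (x + t n))))
          (fun x => 1 / (2 + Real.sin x + Real.sin (Real.pi * x))) atTop K) ∧
      (∀ K : Set ℝ, IsCompact K →
        TendstoUniformlyOn
          (fun n x => 1 / (2 + Real.sin (x + s n) + Real.sin (Real.pi * (x + s n))))
          (fun x => 1 / (2 + Real.sin x + Real.sin (Real.pi * x))) atTop K) := by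
  obtain ⟨k, j, hk, hkj⟩ := exists_tendsto_atTop_mul_sub_tendsto_zero π
  have hkj' : Tendsto (fun n => ((-k n : ℤ) : ℝ) * π - (-j n : ℤ)) atTop (𝓝 0) := by
    refine (neg_zero (G := ℝ) ▸ hkj.neg).congr fun n => ?_
    push_cast
    ring
  refine ⟨fun n => 2 * π * k n, fun n => 2 * π * (-k n : ℤ), ?_, ?_,
    fun K hK => tendstoUniformlyOn_inv_two_add_sin_add_sin_pi_mul_translate hkj hK,
    fun K hK => tendstoUniformlyOn_inv_two_add_sin_add_sin_pi_mul_translate hkj' hK⟩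
  · exact (tendsto_intCast_atTop_iff.mpr hk).const_mul_atTop two_pi_pos
  · exact (tendsto_intCast_atBot_iff.mpr (tendsto_neg_atTop_atBot.comp hk)).const_mul_atBot
      two_pi_pos
end

section
/- (Birkhoff's recurrence theorem) Let (X, ℝ, π) be a flow on a metric space X and let M ⊆ X be a compact minimal set. Then every point u ∈ M is recurrent: u is almost recurrent and its hull H(u) = closure{π(t, u) : t ∈ ℝ} is compact (indeed H(u) = M). -/
open Filter Topology

/-- Birkhoff's recurrence theorem: every point of a compact minimal set of a flow is
recurrent — it is almost recurrent and its hull is compact; indeed the hull equals `M`. -/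
theorem birkhoff_recurrence {X : Type*} [MetricSpace X]
    (π : ℝ → X → X)
    (hcont : Continuous fun p : ℝ × X => π p.1 p.2)
    (hid : ∀ x : X, π 0 x = x)
    (hadd : ∀ (t τ : ℝ) (x : X), π (t + τ) x = π t (π τ x))
    (M : Set X) (hne : M.Nonempty) (hcomp : IsCompact M) (hcl : IsClosed M)
    (hinv : ∀ u ∈ M, ∀ t : ℝ, π t u ∈ M)
    (hmin : ∀ E ⊆ M, E.Nonempty → IsClosed E → (∀ u ∈ E, ∀ t : ℝ, π t u ∈ E) → E = M)
    (u : X) (hu : u ∈ M) :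
    (∀ ε > (0 : ℝ), ∃ l > (0 : ℝ), ∀ a : ℝ,
      ∃ τ ∈ Set.Icc a (a + l), dist (π τ u) u < ε) ∧
    IsCompact (closure (Set.range fun t : ℝ => π t u)) ∧
    closure (Set.range fun t : ℝ => π t u) = M := by
  have hπc : ∀ t : ℝ, Continuous (π t) := fun t =>
    hcont.comp (continuous_const.prodMk continuous_id)
  -- The hull of any point of `M` equals `M`.
  have hull_eq : ∀ v ∈ M, closure (Set.range fun t : ℝ => π t v) = M := by
    intro v hv
    apply hmin
    · exact closure_minimal (Set.range_subset_iff.mpr fun t => hinv v hv t) hcl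
    · exact ⟨v, subset_closure ⟨0, hid v⟩⟩
    · exact isClosed_closure
    · intro w hw t
      have h1 : π t '' closure (Set.range fun s : ℝ => π s v)
          ⊆ closure (π t '' Set.range fun s : ℝ => π s v) :=
        image_closure_subset_closure_image (hπc t)
      have h2 : (π t '' Set.range fun s : ℝ => π s v)
          ⊆ Set.range fun s : ℝ => π s v := by
        rintro _ ⟨_, ⟨s, rfl⟩, rfl⟩
        exact ⟨t + s, hadd t s v⟩
      exact closure_mono h2 (h1 ⟨w, hw, rfl⟩)
  refine ⟨?_, hull_eq u hu ▸ hcomp, hull_eq u hu⟩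
  intro ε hε
  -- For each `v ∈ M`, some time on the orbit of `v` comes `ε/2`-close to `u`.
  have hnear : ∀ v ∈ M, ∃ t : ℝ, dist (π t v) u < ε / 2 := by
    intro v hv
    have : u ∈ closure (Set.range fun t : ℝ => π t v) := (hull_eq v hv) ▸ hu
    rcases Metric.mem_closure_iff.mp this (ε / 2) (by linarith) with ⟨b, ⟨t, rfl⟩, hb⟩
    exact ⟨t, by rwa [dist_comm]⟩
  choose t ht using hnear
  -- Open cover of `M`.
  have hmem : ∀ (v : X) (hv : v ∈ M),
      {w : X | dist (π (t v hv) w) u < ε} ∈ 𝓝 v := by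
    intro v hv
    have : IsOpen {w : X | dist (π (t v hv) w) u < ε} := by
      have : Continuous fun w => dist (π (t v hv) w) u :=
        ((hπc _).dist continuous_const)
      exact isOpen_lt this continuous_const
    exact this.mem_nhds (by simpa using lt_of_lt_of_le (ht v hv) (by linarith))
  obtain ⟨s, hs⟩ := hcomp.elim_nhds_subcover' (fun v hv => {w : X | dist (π (t v hv) w) u < ε}) hmem
  set b : ℝ := ∑ x ∈ s, |t x.1 x.2| with hb
  have hb0 : 0 ≤ b := Finset.sum_nonneg fun x _ => abs_nonneg _
  have hbound : ∀ x ∈ s, |t x.1 x.2| ≤ b :=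
    fun x hx => Finset.single_le_sum (f := fun x : {v // v ∈ M} => |t x.1 x.2|) (fun y _ => abs_nonneg _) hx
  refine ⟨2 * b + 2, by linarith, fun a => ?_⟩
  have hw : π (a + b + 1) u ∈ M := hinv u hu _
  rcases Set.mem_iUnion₂.mp (hs hw) with ⟨x, hx, hxw⟩
  refine ⟨a + b + 1 + t x.1 x.2, ?_, ?_⟩
  · have := abs_le.mp (hbound x hx)
    constructor <;> [linarith [this.1]; linarith [this.2]]
  · have : π (a + b + 1 + t x.1 x.2) u = π (t x.1 x.2) (π (a + b + 1) u) := by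
      rw [add_comm (a + b + 1), hadd]
    rw [this]
    exact hxw
end

section
/- (Shcherbakov) Let (X, ℝ₊, π) be a semiflow on a metric space X, (Ω, ℝ, σ) a flow on a metric space Ω, and h : X → Ω a continuous map satisfying h(π(t, u)) = σ(t, h(u)) for all t ≥ 0 and u ∈ X. Let y ∈ Ω be Poisson stable under (Ω, ℝ, σ), i.e., y ∈ ω_y ∩ α_y. Suppose there exists a weakly regular point u₀ ∈ X with h(u₀) = y, i.e., for every sequence t_n → +∞ with σ(t_n, y) → y, the sequence {π(t_n, u₀)} has compact closure in X. Then there exists a point u ∈ X with h(u) = y such that u is Poisson stable in the positive direction under (X, ℝ₊, π), i.e., u ∈ ω_u. -/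
/-!
Let `L x ⊆ X` be the fiber over `y` of the ω-limit set of `(y, x)` under the product semiflow
`(σ, π)` on `Ω × X`: the limits of `π(tₙ, x)` along times `tₙ → ∞` with `σ(tₙ, y) → y`.
ω-limit sets are closed and invariant, so `L` is transitive (`v ∈ L x → L v ⊆ L x`), and the
graph of `h` is closed and invariant, so `h = y` on `L u₀`. Weak regularity makes `L u₀` compact
and every `L v` with `v ∈ L u₀` nonempty. By Zorn's lemma `L u₀` contains a minimal nonempty
closed set `M` with `L v ⊆ M` for all `v ∈ M`; for `u ∈ M`, `L u` is such a set, so `L u = M ∋ u`.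
-/

open Filter Topology NNReal Set

namespace Flow

variable {τ α β : Type*} [TopologicalSpace τ] [AddZero τ] [TopologicalSpace α]
  [TopologicalSpace β]

def prod (ϕ : Flow τ α) (ψ : Flow τ β) : Flow τ (α × β) where
  toFun t p := (ϕ t p.1, ψ t p.2)
  cont' := (ϕ.continuous continuous_fst (continuous_fst.comp continuous_snd)).prodMk
    (ψ.continuous continuous_fst (continuous_snd.comp continuous_snd))
  map_add' t₁ t₂ p := by simp only [map_add]
  map_zero' p := by simp only [map_zero_apply]

@[simp]
theorem prod_apply (ϕ : Flow τ α) (ψ : Flow τ β) (t : τ) (p : α × β) :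
    ϕ.prod ψ t p = (ϕ t p.1, ψ t p.2) := rfl

theorem isInvariant_omegaLimit_atTop (ϕ : Flow ℝ≥0 α) (s : Set α) :
    IsInvariant ϕ (omegaLimit atTop ϕ s) :=
  ϕ.isInvariant_omegaLimit atTop s fun _ => tendsto_atTop_mono (fun _ => le_add_self) tendsto_id

end Flow

theorem omegaLimit_subset_of_isInvariant {τ α : Type*} [TopologicalSpace α] {f : Filter τ}
    {ϕ : τ → α → α} {s c : Set α} (hc : IsClosed c) (hinv : IsInvariant ϕ c) (hs : s ⊆ c) :
    omegaLimit f ϕ s ⊆ c :=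
  (omegaLimit_subset_closure_image2 f ϕ s univ_mem).trans <|
    closure_minimal (image2_subset_iff.2 fun t _ _ hx => hinv t (hs hx)) hc

theorem mem_omegaLimit_singleton_iff_exists_seq {τ α β : Type*} [TopologicalSpace β]
    [FirstCountableTopology β] {f : Filter τ} [IsCountablyGenerated f] {ϕ : τ → α → β} {x : α}
    {q : β} :
    q ∈ omegaLimit f ϕ {x} ↔
      ∃ t : ℕ → τ, Tendsto t atTop f ∧ Tendsto (fun n => ϕ (t n) x) atTop (𝓝 q) := by
  rw [mem_omegaLimit_singleton_iff_mapClusterPt]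
  refine ⟨fun h => ?_, fun ⟨t, ht, hq⟩ => hq.mapClusterPt.of_comp ht⟩
  obtain ⟨t, hq, ht⟩ := h.exists_seq_tendsto
  exact ⟨t, ht, hq⟩

theorem exists_nnreal_seq_of_exists_real_seq {β : Type*} {g : ℝ → β} {l : Filter β}
    (h : ∃ T : ℕ → ℝ, Tendsto T atTop atTop ∧ Tendsto (fun n => g (T n)) atTop l) :
    ∃ T : ℕ → ℝ≥0, Tendsto T atTop atTop ∧ Tendsto (fun n => g (T n)) atTop l := by
  obtain ⟨T, hT, hg⟩ := h
  refine ⟨fun n => (T n).toNNReal, tendsto_real_toNNReal_atTop.comp hT, hg.congr' ?_⟩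
  filter_upwards [hT.eventually_ge_atTop 0] with n hn
  rw [Real.coe_toNNReal _ hn]

theorem exists_mem_self_of_isCompact {X : Type*} [TopologicalSpace X] {L : X → Set X}
    (hclosed : ∀ x, IsClosed (L x)) (htrans : ∀ x, ∀ v ∈ L x, L v ⊆ L x) {x₀ : X}
    (hcpt : IsCompact (L x₀)) (hne₀ : (L x₀).Nonempty) (hne : ∀ v ∈ L x₀, (L v).Nonempty) :
    ∃ u ∈ L x₀, u ∈ L u := by
  let F : Set (Set X) :=
    {M | M.Nonempty ∧ IsClosed M ∧ M ⊆ L x₀ ∧ ∀ v ∈ M, L v ⊆ M}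
  have hchain : ∀ c ⊆ F, IsChain (· ⊆ ·) c → c.Nonempty → ∃ lb ∈ F, ∀ M ∈ c, lb ⊆ M := by
    intro c hcF hc ⟨M₀, hM₀⟩
    have : Nonempty c := ⟨⟨M₀, hM₀⟩⟩
    have hne : (⋂₀ c).Nonempty :=
      IsCompact.nonempty_sInter_of_directed_nonempty_isCompact_isClosed
        (fun M hM N hN => (hc.total hM hN).elim (fun h => ⟨M, hM, subset_rfl, h⟩)
          (fun h => ⟨N, hN, h, subset_rfl⟩))
        (fun M hM => (hcF hM).1)
        (fun M hM => hcpt.of_isClosed_subset (hcF hM).2.1 (hcF hM).2.2.1)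
        (fun M hM => (hcF hM).2.1)
    refine ⟨⋂₀ c, ⟨hne, isClosed_sInter fun M hM => (hcF hM).2.1,
      (sInter_subset_of_mem hM₀).trans (hcF hM₀).2.2.1, fun v hv => ?_⟩,
      fun M hM => sInter_subset_of_mem hM⟩
    exact subset_sInter fun M hM => (hcF hM).2.2.2 v (hv M hM)
  obtain ⟨M, -, ⟨⟨u, hu⟩, -, hML, hMinv⟩, hMmin⟩ :=
    zorn_superset_nonempty F hchain (L x₀) ⟨hne₀, hclosed x₀, subset_rfl, htrans x₀⟩
  have hLu : L u ∈ F := ⟨hne u (hML hu), hclosed u, (hMinv u hu).trans hML,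
    fun v hv => htrans u v hv⟩
  exact ⟨u, hML hu, hMmin hLu (hMinv u hu) hu⟩

section FiberOmegaLimit

variable {X Ω : Type*}

def fiberOmegaLimit [TopologicalSpace X] [TopologicalSpace Ω] (σ : Flow ℝ≥0 Ω)
    (π : Flow ℝ≥0 X) (y : Ω) (x : X) : Set X :=
  Prod.mk y ⁻¹' omegaLimit atTop (σ.prod π) {(y, x)}

section Topological

variable [TopologicalSpace X] [TopologicalSpace Ω] {σ : Flow ℝ≥0 Ω} {π : Flow ℝ≥0 X} {y : Ω}

theorem isClosed_fiberOmegaLimit (x : X) : IsClosed (fiberOmegaLimit σ π y x) :=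
  (isClosed_omegaLimit _ _ _).preimage (Continuous.prodMk_right y)

theorem fiberOmegaLimit_subset_of_mem {x v : X} (hv : v ∈ fiberOmegaLimit σ π y x) :
    fiberOmegaLimit σ π y v ⊆ fiberOmegaLimit σ π y x :=
  preimage_mono <| omegaLimit_subset_of_isInvariant (isClosed_omegaLimit _ _ _)
    ((σ.prod π).isInvariant_omegaLimit_atTop _)
    (singleton_subset_iff.2 hv)

theorem fiberOmegaLimit_subset_preimage [T2Space Ω] {h : X → Ω} (hcont : Continuous h)
    (hhom : ∀ t x, h (π t x) = σ t (h x)) {x : X} (hx : h x = y) :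
    fiberOmegaLimit σ π y x ⊆ h ⁻¹' {y} := by
  have hgraph : omegaLimit atTop (σ.prod π) {(y, x)} ⊆ {p | h p.2 = p.1} :=
    omegaLimit_subset_of_isInvariant (isClosed_eq (hcont.comp continuous_snd) continuous_fst)
      (fun t p hp => by simp [hhom, hp.out]) (singleton_subset_iff.2 hx)
  exact fun v hv => hgraph hv

end Topological

section Metric

variable [MetricSpace X] [MetricSpace Ω] {σ : Flow ℝ≥0 Ω} {π : Flow ℝ≥0 X} {y : Ω}

theorem mem_fiberOmegaLimit_iff {x v : X} :
    v ∈ fiberOmegaLimit σ π y x ↔ ∃ T : ℕ → ℝ≥0, Tendsto T atTop atTop ∧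
      Tendsto (fun n => σ (T n) y) atTop (𝓝 y) ∧ Tendsto (fun n => π (T n) x) atTop (𝓝 v) := by
  simp only [fiberOmegaLimit, mem_preimage, mem_omegaLimit_singleton_iff_exists_seq,
    Prod.tendsto_iff, Flow.prod_apply]

def IsWeaklyRegular (σ : Flow ℝ≥0 Ω) (π : Flow ℝ≥0 X) (y : Ω) (u₀ : X) : Prop :=
  ∀ T : ℕ → ℝ≥0, Tendsto T atTop atTop → Tendsto (fun n => σ (T n) y) atTop (𝓝 y) →
    IsCompact (closure (range fun n => π (T n) u₀))

variable {u₀ : X}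

theorem IsWeaklyRegular.exists_tendsto_subseq (hreg : IsWeaklyRegular σ π y u₀)
    {T : ℕ → ℝ≥0} (hT : Tendsto T atTop atTop) (hTy : Tendsto (fun n => σ (T n) y) atTop (𝓝 y)) :
    ∃ a, ∃ φ : ℕ → ℕ, StrictMono φ ∧ Tendsto (fun n => π (T (φ n)) u₀) atTop (𝓝 a) := by
  obtain ⟨a, -, φ, hφ, ha⟩ := (hreg T hT hTy).tendsto_subseq fun n => subset_closure ⟨n, rfl⟩
  exact ⟨a, φ, hφ, ha⟩

theorem IsWeaklyRegular.exists_tendsto_subseq_of_mem_omegaLimit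
    (hreg : IsWeaklyRegular σ π y u₀) {p : ℕ → Ω × X}
    (hp : ∀ k, p k ∈ omegaLimit atTop (σ.prod π) {(y, u₀)})
    (hpy : Tendsto (fun k => (p k).1) atTop (𝓝 y)) :
    ∃ a, ∃ φ : ℕ → ℕ, StrictMono φ ∧ Tendsto (fun k => (p (φ k)).2) atTop (𝓝 a) := by
  -- Shadow `p k` by an orbit point of `(y, u₀)` at a time `T k ≥ k`; then `T` is a sequence of
  -- return times of `y`, to which weak regularity applies.
  have happrox : ∀ k : ℕ, ∃ t : ℝ≥0, (k : ℝ≥0) ≤ t ∧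
      dist (σ t y) (p k).1 < 1 / (k + 1) ∧ dist (π t u₀) (p k).2 < 1 / (k + 1) := by
    intro k
    have hclust := (mem_omegaLimit_singleton_iff_mapClusterPt ..).1 (hp k)
    obtain ⟨t, ht, hk⟩ :=
      ((hclust.frequently (Metric.ball_mem_nhds _ Nat.one_div_pos_of_nat)).and_eventually
        (eventually_ge_atTop (k : ℝ≥0))).exists
    rw [Prod.dist_eq, max_lt_iff] at ht
    exact ⟨t, hk, ht⟩
  choose T hTk hTσ hTπ using happrox
  have hsmall : Tendsto (fun k : ℕ => 1 / ((k : ℝ) + 1)) atTop (𝓝 0) :=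
    tendsto_one_div_add_atTop_nhds_zero_nat
  have hT : Tendsto T atTop atTop := tendsto_atTop_mono hTk tendsto_natCast_atTop_atTop
  have hTy : Tendsto (fun k => σ (T k) y) atTop (𝓝 y) :=
    hpy.congr_dist (squeeze_zero (fun _ => dist_nonneg)
      (fun k => ((dist_comm _ _).trans_lt (hTσ k)).le) hsmall)
  obtain ⟨a, φ, hφ, ha⟩ := hreg.exists_tendsto_subseq hT hTy
  exact ⟨a, φ, hφ, ha.congr_dist (squeeze_zero (fun _ => dist_nonneg)
    (fun k => (hTπ (φ k)).le) (hsmall.comp hφ.tendsto_atTop))⟩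

theorem IsWeaklyRegular.isCompact_fiberOmegaLimit (hreg : IsWeaklyRegular σ π y u₀) :
    IsCompact (fiberOmegaLimit σ π y u₀) := by
  refine IsSeqCompact.isCompact fun v hv => ?_
  obtain ⟨a, φ, hφ, ha⟩ :=
    hreg.exists_tendsto_subseq_of_mem_omegaLimit (p := fun k => (y, v k)) hv tendsto_const_nhds
  exact ⟨a, (isClosed_fiberOmegaLimit u₀).mem_of_tendsto ha
    (Eventually.of_forall fun k => hv (φ k)), φ, hφ, ha⟩

theorem IsWeaklyRegular.fiberOmegaLimit_nonempty (hreg : IsWeaklyRegular σ π y u₀)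
    (hy : y ∈ omegaLimit atTop σ {y}) : (fiberOmegaLimit σ π y u₀).Nonempty := by
  obtain ⟨T, hT, hTy⟩ := mem_omegaLimit_singleton_iff_exists_seq.1 hy
  obtain ⟨a, φ, hφ, ha⟩ := hreg.exists_tendsto_subseq hT hTy
  exact ⟨a, mem_fiberOmegaLimit_iff.2
    ⟨T ∘ φ, hT.comp hφ.tendsto_atTop, hTy.comp hφ.tendsto_atTop, ha⟩⟩

theorem IsWeaklyRegular.fiberOmegaLimit_nonempty_of_mem (hreg : IsWeaklyRegular σ π y u₀)
    (hy : y ∈ omegaLimit atTop σ {y}) {u : X} (hu : u ∈ fiberOmegaLimit σ π y u₀) :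
    (fiberOmegaLimit σ π y u).Nonempty := by
  obtain ⟨T, hT, hTy⟩ := mem_omegaLimit_singleton_iff_exists_seq.1 hy
  have hinv := (σ.prod π).isInvariant_omegaLimit_atTop {(y, u₀)}
  obtain ⟨a, φ, hφ, ha⟩ := hreg.exists_tendsto_subseq_of_mem_omegaLimit
    (p := fun k => σ.prod π (T k) (y, u)) (fun k => hinv (T k) hu) hTy
  exact ⟨a, mem_fiberOmegaLimit_iff.2
    ⟨T ∘ φ, hT.comp hφ.tendsto_atTop, hTy.comp hφ.tendsto_atTop, ha⟩⟩

end Metric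

end FiberOmegaLimit

theorem shcherbakov_poisson_stable_general {X Ω : Type*} [MetricSpace X] [MetricSpace Ω]
    (π : ℝ≥0 → X → X)
    (hπcont : Continuous fun p : ℝ≥0 × X => π p.1 p.2)
    (hπid : ∀ x : X, π 0 x = x)
    (hπadd : ∀ (t τ : ℝ≥0) (x : X), π (t + τ) x = π t (π τ x))
    (σ : ℝ → Ω → Ω)
    (hσcont : Continuous fun p : ℝ × Ω => σ p.1 p.2)
    (hσid : ∀ ω : Ω, σ 0 ω = ω)
    (hσadd : ∀ (t τ : ℝ) (ω : Ω), σ (t + τ) ω = σ t (σ τ ω))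
    (h : X → Ω) (hcont : Continuous h)
    (hhom : ∀ (t : ℝ≥0) (x : X), h (π t x) = σ (t : ℝ) (h x))
    (y : Ω)
    (hyω : ∃ T : ℕ → ℝ, Tendsto T atTop atTop ∧
      Tendsto (fun n => σ (T n) y) atTop (𝓝 y))
    (u₀ : X) (hu₀ : h u₀ = y)
    (hreg : ∀ T : ℕ → ℝ≥0, Tendsto T atTop atTop →
      Tendsto (fun n => σ ((T n : ℝ)) y) atTop (𝓝 y) →
      IsCompact (closure (Set.range fun n => π (T n) u₀))) :
    ∃ u : X, h u = y ∧
      ∃ T : ℕ → ℝ≥0, Tendsto T atTop atTop ∧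
        Tendsto (fun n => π (T n) u) atTop (𝓝 u) := by
  let σ' : Flow ℝ≥0 Ω :=
    { toFun t := σ t
      cont' := hσcont.comp (NNReal.continuous_coe.prodMap continuous_id)
      map_add' t τ ω := by simp only [NNReal.coe_add, hσadd]
      map_zero' ω := by simp only [NNReal.coe_zero, hσid] }
  let π' : Flow ℝ≥0 X := ⟨π, hπcont, hπadd, hπid⟩
  have hreg : IsWeaklyRegular σ' π' y u₀ := hreg
  have hy : y ∈ omegaLimit atTop σ' {y} :=
    mem_omegaLimit_singleton_iff_exists_seq.2 (exists_nnreal_seq_of_exists_real_seq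
      (g := fun t => σ t y) hyω)
  obtain ⟨u, hu₀u, huu⟩ := exists_mem_self_of_isCompact isClosed_fiberOmegaLimit
    (fun _ _ => fiberOmegaLimit_subset_of_mem) hreg.isCompact_fiberOmegaLimit
    (hreg.fiberOmegaLimit_nonempty hy) fun _ => hreg.fiberOmegaLimit_nonempty_of_mem hy
  obtain ⟨T, hT, -, hTu⟩ := mem_fiberOmegaLimit_iff.1 huu
  exact ⟨u, fiberOmegaLimit_subset_preimage hcont hhom hu₀ hu₀u, T, hT, hTu⟩

/-- Shcherbakov's theorem: let `(X, ℝ₊, π)` be a semiflow, `(Ω, ℝ, σ)` a flow, and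
`h : X → Ω` a continuous equivariant map. If `y ∈ Ω` is Poisson stable and there exists
a weakly regular point `u₀ ∈ X` with `h(u₀) = y`, then there exists `u ∈ X` with
`h(u) = y` which is Poisson stable in the positive direction, i.e. `u` belongs to its own
ω-limit set. -/
theorem shcherbakov_poisson_stable {X Ω : Type*} [MetricSpace X] [MetricSpace Ω]
    (π : ℝ≥0 → X → X)
    (hπcont : Continuous fun p : ℝ≥0 × X => π p.1 p.2)
    (hπid : ∀ x : X, π 0 x = x)
    (hπadd : ∀ (t τ : ℝ≥0) (x : X), π (t + τ) x = π t (π τ x))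
    (σ : ℝ → Ω → Ω)
    (hσcont : Continuous fun p : ℝ × Ω => σ p.1 p.2)
    (hσid : ∀ ω : Ω, σ 0 ω = ω)
    (hσadd : ∀ (t τ : ℝ) (ω : Ω), σ (t + τ) ω = σ t (σ τ ω))
    (h : X → Ω) (hcont : Continuous h)
    (hhom : ∀ (t : ℝ≥0) (x : X), h (π t x) = σ (t : ℝ) (h x))
    (y : Ω)
    (hyω : ∃ T : ℕ → ℝ, Tendsto T atTop atTop ∧
      Tendsto (fun n => σ (T n) y) atTop (𝓝 y))
    (hyα : ∃ T : ℕ → ℝ, Tendsto T atTop atBot ∧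
      Tendsto (fun n => σ (T n) y) atTop (𝓝 y))
    (u₀ : X) (hu₀ : h u₀ = y)
    (hreg : ∀ T : ℕ → ℝ≥0, Tendsto T atTop atTop →
      Tendsto (fun n => σ ((T n : ℝ)) y) atTop (𝓝 y) →
      IsCompact (closure (Set.range fun n => π (T n) u₀))) :
    ∃ u : X, h u = y ∧
      ∃ T : ℕ → ℝ≥0, Tendsto T atTop atTop ∧
        Tendsto (fun n => π (T n) u) atTop (𝓝 u) :=
  shcherbakov_poisson_stable_general π hπcont hπid hπadd σ hσcont hσid hσadd h hcont hhom y hyω u₀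
    hu₀ hreg
end

section
/- Let Ω be a compact metric space, (Ω, ℝ, σ) a minimal flow on Ω, E a metric space, and φ : ℝ₊ × E × Ω → E a continuous cocycle over (Ω, ℝ, σ). Suppose there exist u₀ ∈ E and ω₀ ∈ Ω such that the set {φ(t, u₀, ω₀) : t ≥ 0} has compact closure in E. Then the skew-product semiflow π(t, (u, ω)) := (φ(t, u, ω), σ(t, ω)) on X = E × Ω possesses a recurrent point; in particular, for every ω ∈ Ω (e.g., ω = ω₀) there exists u ∈ E such that (u, ω) is a recurrent point of (X, ℝ₊, π). -/
/-!
The orbit closure of `(u₀, ω₀)` is compact and invariant, so by Zorn's lemma it contains a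
minimal set `M`. Every point `x` of `M` is recurrent: every orbit starting in `M` is dense in
`M`, so by compactness finitely many times `t` already bring each point of `M` into `B(x, ε)`,
and their maximum bounds the gaps between the return times of `x`. The projection of `M` to `Ω` is
compact and forward invariant, so it contains the nonempty closed `σ`-invariant set
`⋂_{s ≥ 0} σ_s (pr M)`, which is all of `Ω` by minimality; hence `M` meets every fibre.
-/

open Filter Topology NNReal

open Set

section Semiflow

variable {τ X : Type*} [TopologicalSpace X] {π : τ → X → X}

def IsMinimalInvariant (π : τ → X → X) (M : Set X) : Prop :=
  Minimal (fun A : Set X => A.Nonempty ∧ IsClosed A ∧ IsInvariant π A) M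

theorem IsMinimalInvariant.nonempty {M : Set X} (hM : IsMinimalInvariant π M) : M.Nonempty :=
  hM.1.1

theorem IsMinimalInvariant.isClosed {M : Set X} (hM : IsMinimalInvariant π M) : IsClosed M :=
  hM.1.2.1

theorem IsMinimalInvariant.isInvariant {M : Set X} (hM : IsMinimalInvariant π M) :
    IsInvariant π M :=
  hM.1.2.2

theorem exists_isMinimalInvariant_subset {K : Set X} (hKc : IsCompact K) (hKcl : IsClosed K)
    (hKne : K.Nonempty) (hKinv : IsInvariant π K) :
    ∃ M ⊆ K, IsMinimalInvariant π M := by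
  let S : Set (Set X) := {A | A ⊆ K ∧ A.Nonempty ∧ IsClosed A ∧ IsInvariant π A}
  have hchain : ∀ c ⊆ S, IsChain (· ⊆ ·) c → c.Nonempty → ∃ lb ∈ S, ∀ A ∈ c, lb ⊆ A := by
    intro c hcS hc ⟨A₀, hA₀⟩
    have : Nonempty c := ⟨⟨A₀, hA₀⟩⟩
    refine ⟨⋂₀ c, ⟨(sInter_subset_of_mem hA₀).trans (hcS hA₀).1, ?_, ?_, ?_⟩,
      fun A hA => sInter_subset_of_mem hA⟩
    · exact IsCompact.nonempty_sInter_of_directed_nonempty_isCompact_isClosed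
        (IsChain.directedOn hc.symm) (fun A hA => (hcS hA).2.1)
        (fun A hA => hKc.of_isClosed_subset (hcS hA).2.2.1 (hcS hA).1)
        (fun A hA => (hcS hA).2.2.1)
    · exact isClosed_sInter fun A hA => (hcS hA).2.2.1
    · exact fun t x hx => mem_sInter.2 fun A hA => (hcS hA).2.2.2 t (hx A hA)
  obtain ⟨M, hMK, hM⟩ := zorn_superset_nonempty S hchain K ⟨subset_rfl, hKne, hKcl, hKinv⟩
  exact ⟨M, hMK, hM.1.2, fun A hA hAM => hM.2 ⟨hAM.trans hM.1.1, hA⟩ hAM⟩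

variable [Add τ]

theorem isInvariant_closure_range (hcont : ∀ t, Continuous (π t))
    (hadd : ∀ t s x, π (t + s) x = π t (π s x)) (x : X) :
    IsInvariant π (closure (range fun t => π t x)) := fun t =>
  MapsTo.closure (fun _ ⟨s, hs⟩ => ⟨t + s, hs ▸ hadd t s x⟩) (hcont t)

theorem IsMinimalInvariant.closure_range_eq {M : Set X} (hM : IsMinimalInvariant π M)
    (hcont : ∀ t, Continuous (π t)) (hadd : ∀ t s x, π (t + s) x = π t (π s x))
    {x : X} (hx : x ∈ M) [Nonempty τ] :
    closure (range fun t => π t x) = M := by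
  have hsub : closure (range fun t => π t x) ⊆ M :=
    closure_minimal (range_subset_iff.2 fun t => hM.isInvariant t hx) hM.isClosed
  exact hM.eq_of_subset ⟨(range_nonempty _).closure, isClosed_closure,
    isInvariant_closure_range hcont hadd x⟩ hsub

end Semiflow

section Recurrence

variable {X : Type*} [PseudoMetricSpace X] {π : ℝ≥0 → X → X}

def IsAlmostRecurrent (π : ℝ≥0 → X → X) (x : X) : Prop :=
  ∀ ε > (0 : ℝ), ∃ l > (0 : ℝ≥0), ∀ a : ℝ≥0, ∃ τ ∈ Icc a (a + l), dist (π τ x) x < ε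

def IsRecurrent (π : ℝ≥0 → X → X) (x : X) : Prop :=
  IsAlmostRecurrent π x ∧ IsCompact (closure (range fun t => π t x))

variable {M : Set X}

theorem IsMinimalInvariant.isAlmostRecurrent (hM : IsMinimalInvariant π M) (hMc : IsCompact M)
    (hcont : ∀ t, Continuous (π t)) (hadd : ∀ t s x, π (t + s) x = π t (π s x))
    {x : X} (hx : x ∈ M) :
    IsAlmostRecurrent π x := by
  intro ε hε
  have hcover : M ⊆ ⋃ t, π t ⁻¹' Metric.ball x ε := fun y hy => by
    have hxy : x ∈ closure (range fun t => π t y) :=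
      (hM.closure_range_eq hcont hadd hy).symm ▸ hx
    obtain ⟨_, ⟨t, rfl⟩, ht⟩ := Metric.mem_closure_iff.1 hxy ε hε
    exact mem_iUnion.2 ⟨t, by rwa [mem_preimage, Metric.mem_ball, dist_comm]⟩
  obtain ⟨F, hF⟩ := hMc.elim_finite_subcover _
    (fun t => Metric.isOpen_ball.preimage (hcont t)) hcover
  refine ⟨F.sup id + 1, by positivity, fun a => ?_⟩
  obtain ⟨t, htF, ht⟩ := mem_iUnion₂.1 (hF (hM.isInvariant a hx))
  refine ⟨t + a, ⟨le_add_self, ?_⟩, by rwa [hadd]⟩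
  calc t + a ≤ F.sup id + 1 + a := by
        gcongr; exact (Finset.le_sup (f := id) htF).trans (le_add_of_nonneg_right zero_le_one)
    _ = a + (F.sup id + 1) := add_comm _ _

theorem IsMinimalInvariant.isRecurrent (hM : IsMinimalInvariant π M) (hMc : IsCompact M)
    (hcont : ∀ t, Continuous (π t)) (hadd : ∀ t s x, π (t + s) x = π t (π s x))
    {x : X} (hx : x ∈ M) :
    IsRecurrent π x :=
  ⟨hM.isAlmostRecurrent hMc hcont hadd hx, hM.closure_range_eq hcont hadd hx ▸ hMc⟩

end Recurrence

section MinimalFlow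

variable {Ω : Type*} [TopologicalSpace Ω] [T2Space Ω] {σ : ℝ → Ω → Ω}

theorem eq_univ_of_isInvariant_nnreal (hσcont : ∀ t, Continuous (σ t))
    (hσadd : ∀ (t τ : ℝ) (ω : Ω), σ (t + τ) ω = σ t (σ τ ω))
    (hmin : ∀ F : Set Ω, F.Nonempty → IsClosed F → IsInvariant σ F → F = univ)
    {P : Set Ω} (hPc : IsCompact P) (hPne : P.Nonempty)
    (hPinv : IsInvariant (fun t : ℝ≥0 => σ t) P) :
    P = univ := by
  -- Points of `K` have preimages in `P` arbitrarily far back in time, so unlike `P` the set `K`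
  -- is also invariant under negative times.
  set K := ⋂ s : ℝ≥0, σ s '' P
  have hanti : Antitone fun s : ℝ≥0 => σ s '' P := by
    rintro s t hst _ ⟨p, hp, rfl⟩
    refine ⟨σ ↑(t - s) p, hPinv _ hp, ?_⟩
    rw [← hσadd, ← NNReal.coe_add, add_tsub_cancel_of_le hst]
  have himc : ∀ s : ℝ≥0, IsCompact (σ s '' P) := fun s => hPc.image (hσcont s)
  have hKne : K.Nonempty :=
    IsCompact.nonempty_iInter_of_directed_nonempty_isCompact_isClosed _
      hanti.directed_ge (fun _ => hPne.image _) himc fun s => (himc s).isClosed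
  have hKinv : IsInvariant σ K := by
    intro t ω hω
    refine mem_iInter.2 fun s => ?_
    obtain ⟨p, hp, rfl⟩ := mem_iInter.1 hω (Real.toNNReal (s - t))
    have hr : 0 ≤ t + Real.toNNReal (s - t) - s := by
      linarith [Real.le_coe_toNNReal ((s : ℝ) - t)]
    refine ⟨σ (t + Real.toNNReal (s - t) - s) p, hPinv ⟨_, hr⟩ hp, ?_⟩
    rw [← hσadd, ← hσadd]
    ring_nf
  have hKP : K ⊆ P := (iInter_subset _ 1).trans (image_subset_iff.2 (hPinv 1))
  exact eq_univ_of_univ_subset <|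
    hmin K hKne (isClosed_iInter fun s => (himc s).isClosed) hKinv ▸ hKP

end MinimalFlow

section SkewProduct

variable {Ω E : Type*}

def skewProduct (φ : ℝ≥0 → E → Ω → E) (σ : ℝ → Ω → Ω) (t : ℝ≥0) (x : E × Ω) : E × Ω :=
  (φ t x.1 x.2, σ t x.2)

variable {φ : ℝ≥0 → E → Ω → E} {σ : ℝ → Ω → Ω}

theorem skewProduct_add (hσadd : ∀ (t τ : ℝ) (ω : Ω), σ (t + τ) ω = σ t (σ τ ω))
    (hφadd : ∀ (t τ : ℝ≥0) (u : E) (ω : Ω), φ (t + τ) u ω = φ t (φ τ u ω) (σ τ ω))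
    (t s : ℝ≥0) (x : E × Ω) :
    skewProduct φ σ (t + s) x = skewProduct φ σ t (skewProduct φ σ s x) := by
  simp only [skewProduct, hφadd, NNReal.coe_add, hσadd]

variable [TopologicalSpace Ω] [TopologicalSpace E]

theorem continuous_skewProduct (hσcont : Continuous fun p : ℝ × Ω => σ p.1 p.2)
    (hφcont : Continuous fun p : ℝ≥0 × E × Ω => φ p.1 p.2.1 p.2.2) (t : ℝ≥0) :
    Continuous (skewProduct φ σ t) :=
  (hφcont.comp (Continuous.prodMk_right t)).prodMk
    (hσcont.comp ((Continuous.prodMk_right (t : ℝ)).comp continuous_snd))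

theorem isCompact_closure_range_skewProduct [CompactSpace Ω] {u₀ : E} {ω₀ : Ω}
    (hb : IsCompact (closure (range fun t : ℝ≥0 => φ t u₀ ω₀))) :
    IsCompact (closure (range fun t => skewProduct φ σ t (u₀, ω₀))) := by
  refine (hb.prod isCompact_univ).of_isClosed_subset isClosed_closure ?_
  rw [← closure_univ, ← closure_prod_eq]
  exact closure_mono (range_subset_iff.2 fun t => ⟨mem_range_self t, mem_univ _⟩)

theorem image_snd_eq_univ_of_isInvariant_skewProduct [T2Space Ω]
    (hσcont : Continuous fun p : ℝ × Ω => σ p.1 p.2)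
    (hσadd : ∀ (t τ : ℝ) (ω : Ω), σ (t + τ) ω = σ t (σ τ ω))
    (hmin : ∀ F : Set Ω, F.Nonempty → IsClosed F → IsInvariant σ F → F = univ)
    {M : Set (E × Ω)} (hMc : IsCompact M) (hMne : M.Nonempty)
    (hMinv : IsInvariant (skewProduct φ σ) M) :
    Prod.snd '' M = univ :=
  eq_univ_of_isInvariant_nnreal (fun t => hσcont.comp (Continuous.prodMk_right t)) hσadd hmin
    (hMc.image continuous_snd) (hMne.image _)
    (fun t _ ⟨x, hx, hxω⟩ => ⟨skewProduct φ σ t x, hMinv t hx, hxω ▸ rfl⟩)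

end SkewProduct

theorem skew_product_has_recurrent_point_general {Ω E : Type*}
    [MetricSpace Ω] [CompactSpace Ω] [MetricSpace E]
    (σ : ℝ → Ω → Ω)
    (hσcont : Continuous fun p : ℝ × Ω => σ p.1 p.2)
    (hσadd : ∀ (t τ : ℝ) (ω : Ω), σ (t + τ) ω = σ t (σ τ ω))
    (hmin : ∀ F : Set Ω, F.Nonempty → IsClosed F →
      (∀ ω ∈ F, ∀ t : ℝ, σ t ω ∈ F) → F = Set.univ)
    (φ : ℝ≥0 → E → Ω → E)
    (hφcont : Continuous fun p : ℝ≥0 × E × Ω => φ p.1 p.2.1 p.2.2)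
    (hφadd : ∀ (t τ : ℝ≥0) (u : E) (ω : Ω),
      φ (t + τ) u ω = φ t (φ τ u ω) (σ (τ : ℝ) ω))
    (u₀ : E) (ω₀ : Ω)
    (hb : IsCompact (closure (Set.range fun t : ℝ≥0 => φ t u₀ ω₀))) :
    ∀ ω : Ω, ∃ u : E,
      (∀ ε > (0 : ℝ), ∃ l > (0 : ℝ≥0), ∀ a : ℝ≥0, ∃ τ ∈ Set.Icc a (a + l),
        dist ((φ τ u ω, σ (τ : ℝ) ω) : E × Ω) ((u, ω) : E × Ω) < ε) ∧
      IsCompact (closure (Set.range fun t : ℝ≥0 =>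
        ((φ t u ω, σ (t : ℝ) ω) : E × Ω))) := by
  have hcont := continuous_skewProduct hσcont hφcont
  have hadd := skewProduct_add hσadd hφadd
  have hK := isCompact_closure_range_skewProduct (σ := σ) hb
  obtain ⟨M, hMK, hM⟩ := exists_isMinimalInvariant_subset hK isClosed_closure
    (range_nonempty _).closure (isInvariant_closure_range hcont hadd (u₀, ω₀))
  have hMc : IsCompact M := hK.of_isClosed_subset hM.isClosed hMK
  have hsnd : Prod.snd '' M = univ :=
    image_snd_eq_univ_of_isInvariant_skewProduct hσcont hσadd
      (fun F hne hcl hinv => hmin F hne hcl fun _ hω t => hinv t hω)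
      hMc hM.nonempty hM.isInvariant
  intro ω
  obtain ⟨⟨u, _⟩, hx, rfl⟩ := hsnd.symm ▸ mem_univ ω
  exact ⟨u, hM.isRecurrent hMc hcont hadd hx⟩

/-- Let `Ω` be a compact metric space carrying a minimal flow `σ`, and let `φ` be a
continuous cocycle over `(Ω, ℝ, σ)` with fiber a metric space `E`. If some trajectory
`{φ(t, u₀, ω₀) : t ≥ 0}` has compact closure in `E`, then for every `ω ∈ Ω` there exists
`u ∈ E` such that `(u, ω)` is a recurrent point of the skew-product semiflow
`π(t, (u, ω)) = (φ(t, u, ω), σ(t, ω))` on `E × Ω`: it is almost recurrent and the closure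
of its positive semi-trajectory is compact. -/
theorem skew_product_has_recurrent_point {Ω E : Type*}
    [MetricSpace Ω] [CompactSpace Ω] [MetricSpace E]
    (σ : ℝ → Ω → Ω)
    (hσcont : Continuous fun p : ℝ × Ω => σ p.1 p.2)
    (hσid : ∀ ω : Ω, σ 0 ω = ω)
    (hσadd : ∀ (t τ : ℝ) (ω : Ω), σ (t + τ) ω = σ t (σ τ ω))
    (hmin : ∀ F : Set Ω, F.Nonempty → IsClosed F →
      (∀ ω ∈ F, ∀ t : ℝ, σ t ω ∈ F) → F = Set.univ)
    (φ : ℝ≥0 → E → Ω → E)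
    (hφcont : Continuous fun p : ℝ≥0 × E × Ω => φ p.1 p.2.1 p.2.2)
    (hφid : ∀ (u : E) (ω : Ω), φ 0 u ω = u)
    (hφadd : ∀ (t τ : ℝ≥0) (u : E) (ω : Ω),
      φ (t + τ) u ω = φ t (φ τ u ω) (σ (τ : ℝ) ω))
    (u₀ : E) (ω₀ : Ω)
    (hb : IsCompact (closure (Set.range fun t : ℝ≥0 => φ t u₀ ω₀))) :
    ∀ ω : Ω, ∃ u : E,
      (∀ ε > (0 : ℝ), ∃ l > (0 : ℝ≥0), ∀ a : ℝ≥0, ∃ τ ∈ Set.Icc a (a + l),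
        dist ((φ τ u ω, σ (τ : ℝ) ω) : E × Ω) ((u, ω) : E × Ω) < ε) ∧
      IsCompact (closure (Set.range fun t : ℝ≥0 =>
        ((φ t u ω, σ (t : ℝ) ω) : E × Ω))) :=
  skew_product_has_recurrent_point_general σ hσcont hσadd hmin φ hφcont hφadd u₀ ω₀ hb
end
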